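/- Fix 0 < ε < 1 and a > 0, let Ω = [−a, a] and Ω_n = (1 − ε^n)Ω for n ≥ 1, so |Ω_n| = 2a(1 − ε^n). For each n ≥ 1 define ψ̂_n : ℝ → ℝ by the infinite product ψ̂_n(t) = Π_{s=0}^{∞} sinc(t · ε^{ns} |Ω_n|), where sinc(u) = sin(πu)/(πu) for u ≠ 0 and sinc(0) = 1. Then each infinite product converges for every t, and the sequence of functions ψ̂_n converges uniformly on ℝ as n → ∞ to the function t ↦ sinc(2a t), which is |Ω|^{-1} times the Fourier transform of the indicator function of Ω. -/

import Mathlib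

open MeasureTheory Filter Complex
open scoped Topology ENNReal NNReal Real

noncomputable section

namespace ModelSets

variable {m : ℕ}

/-- Translation operator `T_λ g (t) = g (t - λ)`. -/
def Tr (lam : Fin m → ℝ) (g : (Fin m → ℝ) → ℂ) : (Fin m → ℝ) → ℂ := fun t => g (t - lam)

/-- Euclidean dot product on `ℝ^m`. -/
def dotm (x y : Fin m → ℝ) : ℝ := ∑ i, x i * y i

/-- Modulation operator `M_β g (t) = e^{2πi β·t} g(t)`. -/
def Mod (β : Fin m → ℝ) (g : (Fin m → ℝ) → ℂ) : (Fin m → ℝ) → ℂ :=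
  fun t => Complex.exp (2 * Real.pi * Complex.I * (dotm β t : ℝ)) * g t

/-- `L²` inner product `⟨f, g⟩ = ∫ f conj(g)`. -/
def ip (f g : (Fin m → ℝ) → ℂ) : ℂ := ∫ t, f t * (starRingEnd ℂ) (g t)

/-- Square of the `L²` norm. -/
def norm2sq (f : (Fin m → ℝ) → ℂ) : ℝ := ∫ t, ‖f t‖ ^ 2

/-- Fourier transform on `ℝ^m`: `f̂(ω) = ∫ f(t) e^{-2πi t·ω} dt`. -/
def FT (f : (Fin m → ℝ) → ℂ) : (Fin m → ℝ) → ℂ :=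
  fun ω => ∫ t, f t * Complex.exp (-(2 * Real.pi * Complex.I) * (dotm t ω : ℝ))

/-- Fourier transform of a real-valued function on `ℝ`. -/
def FT1 (ψ : ℝ → ℝ) : ℝ → ℂ :=
  fun ω => ∫ t, (ψ t : ℂ) * Complex.exp (-(2 * Real.pi * Complex.I) * (t * ω : ℝ))

/-- Wiener amalgam space `W(L^p, ℓ¹)` on `ℝ^m`. -/
def MemW (p : ℝ≥0∞) (F : (Fin m → ℝ) → ℂ) : Prop :=
  (∑' k : Fin m → ℤ,
    eLpNorm (Set.indicator {t : Fin m → ℝ | ∀ i, (k i : ℝ) ≤ t i ∧ t i < k i + 1} F) p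
      volume) ≠ ⊤

/-- `Λ` is relatively separated with constant `C`:
every unit cube contains at most `C` points of `Λ`. -/
def RelSep (Λ : Set (Fin m → ℝ)) (C : ℕ) : Prop :=
  ∀ x : Fin m → ℝ,
    {lam ∈ Λ | ∀ i, x i ≤ lam i ∧ lam i ≤ x i + 1}.Finite ∧
    {lam ∈ Λ | ∀ i, x i ≤ lam i ∧ lam i ≤ x i + 1}.ncard ≤ C

/-- `Λ` is relatively separated. -/
def IsRelSep (Λ : Set (Fin m → ℝ)) : Prop := ∃ C : ℕ, RelSep Λ C

/-- `{T_λ g_k : k ∈ K, λ ∈ Λ}` is a Bessel sequence with bound `B`. -/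
def IsBessel {K : Type*} (g : K → (Fin m → ℝ) → ℂ) (Λ : Set (Fin m → ℝ)) (B : ℝ) : Prop :=
  ∀ f : (Fin m → ℝ) → ℂ, MemLp f 2 volume →
    ∑' p : K × Λ, ‖ip f (Tr p.2.1 (g p.1))‖ ^ 2 ≤ B * norm2sq f

/-- `{T_λ g_k : k ∈ K, λ ∈ Λ}` is a frame with bounds `A`, `B`. -/
def IsFrame {K : Type*} (g : K → (Fin m → ℝ) → ℂ) (Λ : Set (Fin m → ℝ)) (A B : ℝ) : Prop :=
  ∀ f : (Fin m → ℝ) → ℂ, MemLp f 2 volume →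
    A * norm2sq f ≤ ∑' p : K × Λ, ‖ip f (Tr p.2.1 (g p.1))‖ ^ 2 ∧
      ∑' p : K × Λ, ‖ip f (Tr p.2.1 (g p.1))‖ ^ 2 ≤ B * norm2sq f

/-- Dot product (pairing) on `ℝ^m × ℝ`. -/
def dotE (p q : (Fin m → ℝ) × ℝ) : ℝ := dotm p.1 q.1 + p.2 * q.2

/-- The dual lattice `Γ* = {η : γ·η ∈ ℤ for all γ ∈ Γ}`, as a set. -/
def dualSet (Γ : Submodule ℤ ((Fin m → ℝ) × ℝ)) : Set ((Fin m → ℝ) × ℝ) :=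
  {η | ∀ γ ∈ Γ, ∃ z : ℤ, dotE γ η = (z : ℝ)}

/-- The model set `Λ(Ω) = {p₁(γ) : γ ∈ Γ, p₂(γ) ∈ Ω}`. -/
def modelSet (Γ : Submodule ℤ ((Fin m → ℝ) × ℝ)) (Ω : Set ℝ) : Set (Fin m → ℝ) :=
  {x | ∃ γ ∈ (Γ : Set ((Fin m → ℝ) × ℝ)), γ.2 ∈ Ω ∧ γ.1 = x}

open scoped Classical in
/-- The weight `w_ψ(λ) = ψ(p₂ γ)` for `λ = p₁ γ`, `γ ∈ Γ` (and `0` if `λ ∉ p₁(Γ)`).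
Well defined (independent of the choice of `γ`) when `p₁` is injective on `Γ`. -/
def wpsi (Γ : Submodule ℤ ((Fin m → ℝ) × ℝ)) (ψ : ℝ → ℝ) (lam : Fin m → ℝ) : ℝ :=
  if h : ∃ γ : (Fin m → ℝ) × ℝ, γ ∈ Γ ∧ γ.1 = lam then ψ h.choose.2 else 0

/-- The covolume `vol(Γ)` of the lattice `Γ ⊂ ℝ^m × ℝ`. -/
def covol (Γ : Submodule ℤ ((Fin m → ℝ) × ℝ)) : ℝ := ZLattice.covolume Γ volume

/-- The `ψ`-bracket product
`[f̂,ĝ]^ψ(t) = Σ_{η ∈ Γ*} vol(Γ)⁻¹ ψ̂(−p₂*(η)) f̂(t − p₁*(η)) conj(ĝ(t − p₁*(η)))`. -/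
def bracket (Γ : Submodule ℤ ((Fin m → ℝ) × ℝ)) (ψ : ℝ → ℝ)
    (f g : (Fin m → ℝ) → ℂ) (t : Fin m → ℝ) : ℂ :=
  ∑' η : dualSet Γ,
    ((covol Γ)⁻¹ : ℂ) * FT1 ψ (-(η : (Fin m → ℝ) × ℝ).2) *
      FT f (t - (η : (Fin m → ℝ) × ℝ).1) *
      (starRingEnd ℂ) (FT g (t - (η : (Fin m → ℝ) × ℝ).1))

/-- The cube `[0,R]^m`. -/
def cube (m : ℕ) (R : ℝ) : Set (Fin m → ℝ) := {t | ∀ i, 0 ≤ t i ∧ t i ≤ R}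

/-- `F` has mean value `c`: `R^{-m} ∫_{[0,R]^m} F → c` as `R → ∞`. -/
def MeanTendsto (F : (Fin m → ℝ) → ℂ) (c : ℂ) : Prop :=
  Tendsto (fun R : ℝ => (R ^ m)⁻¹ • ∫ t in cube m R, F t) atTop (𝓝 c)

/-- Bohr almost periodic function on `ℝ^m`. -/
def BohrAP (F : (Fin m → ℝ) → ℂ) : Prop :=
  Continuous F ∧ (∃ C : ℝ, ∀ t, ‖F t‖ ≤ C) ∧
    ∀ ε > (0 : ℝ), ∃ r > (0 : ℝ), ∀ x : Fin m → ℝ, ∃ τ : Fin m → ℝ,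
      (∀ i, x i ≤ τ i ∧ τ i ≤ x i + r) ∧ ∀ t, ‖F (t + τ) - F t‖ ≤ ε

/-- Bohr almost periodic function on `ℝ^m × ℝ^m`. -/
def BohrAP2 (F : (Fin m → ℝ) × (Fin m → ℝ) → ℂ) : Prop :=
  Continuous F ∧ (∃ C : ℝ, ∀ t, ‖F t‖ ≤ C) ∧
    ∀ ε > (0 : ℝ), ∃ r > (0 : ℝ), ∀ x : (Fin m → ℝ) × (Fin m → ℝ),
      ∃ τ : (Fin m → ℝ) × (Fin m → ℝ),
        (∀ i, x.1 i ≤ τ.1 i ∧ τ.1 i ≤ x.1 i + r) ∧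
        (∀ i, x.2 i ≤ τ.2 i ∧ τ.2 i ≤ x.2 i + r) ∧
        ∀ t, ‖F (t + τ) - F t‖ ≤ ε

/-- The normalized sinc function `sinc(u) = sin(πu)/(πu)`, `sinc 0 = 1`. -/
def sinc (u : ℝ) : ℝ := if u = 0 then 1 else Real.sin (Real.pi * u) / (Real.pi * u)

/-- `Φ(t) = sin(π|Ω|t)/(π|Ω|t)` for `Ω = [-a,a]`, i.e. `|Ω|⁻¹` times the Fourier
transform of the indicator of `Ω`. -/
def Phi (a : ℝ) (t : ℝ) : ℝ := sinc (2 * a * t)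

/-- The density `D(Λ(Ω)) = vol(Γ)⁻¹ |Ω|` of the simple model set with window `Ω = [-a,a]`. -/
def density (Γ : Submodule ℤ ((Fin m → ℝ) × ℝ)) (a : ℝ) : ℝ := (covol Γ)⁻¹ * (2 * a)

end ModelSets

open ModelSets MeasureTheory Filter

/-!
Writing `sinc u = ∫₀¹ cos (π u t) dt` shows that `sinc` is bounded by `1`, is `π`-Lipschitz and
satisfies `|1 - sinc u| ≤ (π u)² / 2`. Hence the factors of `ψ̂_n(t)` after the first differ
from `1` by a geometric sequence with ratio `ε^{2n}`, so the product converges and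
`ψ̂_n(t) = sinc (t |Ω_n|) (1 + O(t² ε^{2n}))`. As `|Ω_n| → 2a`, this gives uniform convergence to
`sinc (2 a t)` on bounded sets of `t`; for large `|t|` both sides are `O(1/|t|)` uniformly in `n`,
because `|u sinc u| ≤ 1/π`.
-/

section InfiniteProduct

variable {ι R : Type*} [NormedCommRing R]

theorem Finset.norm_prod_sub_one_le_sum_norm_sub_one {f : ι → R} (s : Finset ι)
    (hf : ∀ i ∈ s, ‖f i‖ ≤ 1) : ‖∏ i ∈ s, f i - 1‖ ≤ ∑ i ∈ s, ‖f i - 1‖ := by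
  classical
  induction s using Finset.induction_on with
  | empty => simp
  | insert j s hj ih =>
    rw [Finset.prod_insert hj, Finset.sum_insert hj]
    have hfj : ‖f j‖ ≤ 1 := hf j (Finset.mem_insert_self j s)
    have ih' := ih fun i hi => hf i (Finset.mem_insert_of_mem hi)
    calc ‖f j * ∏ i ∈ s, f i - 1‖ = ‖f j * (∏ i ∈ s, f i - 1) + (f j - 1)‖ := by ring_nf
      _ ≤ ‖f j‖ * ‖∏ i ∈ s, f i - 1‖ + ‖f j - 1‖ :=
        (norm_add_le _ _).trans (add_le_add_left (norm_mul_le _ _) _)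
      _ ≤ ‖f j - 1‖ + ∑ i ∈ s, ‖f i - 1‖ := by
        nlinarith [norm_nonneg (∏ i ∈ s, f i - 1)]

variable [NormOneClass R]

theorem norm_tprod_le_one {f : ι → R} (hf : ∀ i, ‖f i‖ ≤ 1) : ‖∏' i, f i‖ ≤ 1 := by
  by_cases hm : Multipliable f
  · refine le_of_tendsto (continuous_norm.tendsto _ |>.comp hm.hasProd)
      (Filter.Eventually.of_forall fun s => ?_)
    exact Finset.prod_induction f (‖·‖ ≤ 1)
      (fun x y hx hy => (norm_mul_le x y).trans (mul_le_one₀ hx (norm_nonneg y) hy))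
      norm_one.le fun i _ => hf i
  · simp [tprod_eq_one_of_not_multipliable hm]

variable [CompleteSpace R]

theorem multipliable_of_summable_norm_sub_one {f : ι → R} (hf : Summable fun i => ‖f i - 1‖) :
    Multipliable f := by
  simpa using multipliable_one_add_of_summable hf

theorem norm_tprod_sub_one_le_tsum {f : ι → R} (h1 : ∀ i, ‖f i‖ ≤ 1)
    (hf : Summable fun i => ‖f i - 1‖) : ‖∏' i, f i - 1‖ ≤ ∑' i, ‖f i - 1‖ := by
  refine le_of_tendsto ((multipliable_of_summable_norm_sub_one hf).hasProd.sub_const 1).norm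
    (Filter.Eventually.of_forall fun s => ?_)
  exact (s.norm_prod_sub_one_le_sum_norm_sub_one fun i _ => h1 i).trans
    (hf.sum_le_tsum s fun i _ => norm_nonneg _)

end InfiniteProduct

section UniformConvergence

variable {ι : Type*} {l : Filter ι}

theorem tendstoUniformlyOn_of_dist_le {α β : Type*} [PseudoMetricSpace β] {F : ι → α → β}
    {f : α → β} {s : Set α} {b : ι → ℝ} (hb : Tendsto b l (𝓝 0))
    (h : ∀ᶠ n in l, ∀ x ∈ s, dist (f x) (F n x) ≤ b n) : TendstoUniformlyOn F f l s := by
  rw [Metric.tendstoUniformlyOn_iff]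
  intro δ hδ
  filter_upwards [h, hb.eventually (gt_mem_nhds hδ)] with n hn hbn x hx
    using (hn x hx).trans_lt hbn

theorem tendstoUniformly_of_tendstoUniformlyOn_closedBall_of_norm_mul_le {E G : Type*}
    [SeminormedAddCommGroup E] [SeminormedAddCommGroup G] {F : ι → E → G} {f : E → G} {C : ℝ}
    (hloc : ∀ T, TendstoUniformlyOn F f l (Metric.closedBall 0 T))
    (hF : ∀ᶠ n in l, ∀ x, ‖x‖ * ‖F n x‖ ≤ C) (hf : ∀ x, ‖x‖ * ‖f x‖ ≤ C) :
    TendstoUniformly F f l := by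
  rw [Metric.tendstoUniformly_iff]
  intro δ hδ
  have hC : 0 ≤ C := by simpa using hf 0
  filter_upwards [Metric.tendstoUniformlyOn_iff.1 (hloc (2 * C / δ)) δ hδ, hF] with n hnear hfar x
  by_cases hx : ‖x‖ ≤ 2 * C / δ
  · exact hnear x (mem_closedBall_zero_iff.2 hx)
  · replace hx := not_le.1 hx
    have hx0 : 0 < ‖x‖ := (div_nonneg (by positivity) hδ.le).trans_lt hx
    refine lt_of_mul_lt_mul_left ?_ hx0.le
    calc ‖x‖ * dist (f x) (F n x) ≤ ‖x‖ * ‖f x‖ + ‖x‖ * ‖F n x‖ := by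
          rw [← mul_add, dist_eq_norm]
          exact mul_le_mul_of_nonneg_left (norm_sub_le _ _) hx0.le
      _ ≤ 2 * C := by linarith [hf x, hfar x]
      _ < ‖x‖ * δ := (div_lt_iff₀ hδ).1 hx

end UniformConvergence

namespace Real

theorem mul_sinc (x : ℝ) : x * sinc x = sin x := by
  rcases eq_or_ne x 0 with rfl | hx
  · simp
  · rw [sinc_of_ne_zero hx, mul_div_cancel₀ _ hx]

theorem sinc_eq_integral_cos (x : ℝ) : sinc x = ∫ t in (0 : ℝ)..1, cos (x * t) := by
  rcases eq_or_ne x 0 with rfl | hx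
  · simp
  · rw [intervalIntegral.integral_comp_mul_left (fun t => cos t) hx, integral_cos,
      sinc_of_ne_zero hx]
    simp [div_eq_inv_mul]

theorem abs_sinc_sub_sinc_le (x y : ℝ) : |sinc x - sinc y| ≤ |x - y| := by
  have hint (z : ℝ) : IntervalIntegrable (fun t => cos (z * t)) volume 0 1 :=
    (by fun_prop : Continuous fun t => cos (z * t)).intervalIntegrable 0 1
  rw [sinc_eq_integral_cos, sinc_eq_integral_cos, ← intervalIntegral.integral_sub (hint x) (hint y)]
  have hbound : ∀ t ∈ Set.uIoc (0 : ℝ) 1, ‖cos (x * t) - cos (y * t)‖ ≤ |x - y| := by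
    intro t ht
    rw [Set.uIoc_of_le zero_le_one] at ht
    calc ‖cos (x * t) - cos (y * t)‖ ≤ |x * t - y * t| := abs_cos_sub_cos_le _ _
      _ = |x - y| * |t| := by rw [← sub_mul, abs_mul]
      _ ≤ |x - y| := mul_le_of_le_one_right (abs_nonneg _)
          (abs_le.2 ⟨by linarith [ht.1], ht.2⟩)
  simpa using intervalIntegral.norm_integral_le_of_norm_le_const hbound

theorem abs_one_sub_sinc_le (x : ℝ) : |1 - sinc x| ≤ x ^ 2 / 2 := by
  have hint : IntervalIntegrable (fun t => cos (x * t)) volume 0 1 :=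
    (by fun_prop : Continuous fun t => cos (x * t)).intervalIntegrable 0 1
  have hint_sub : ∫ t in (0 : ℝ)..1, (1 - cos (x * t)) = 1 - sinc x := by
    rw [intervalIntegral.integral_sub intervalIntegrable_const hint, sinc_eq_integral_cos]
    simp
  rw [← hint_sub]
  have hbound : ∀ t ∈ Set.uIoc (0 : ℝ) 1, ‖1 - cos (x * t)‖ ≤ x ^ 2 / 2 := by
    intro t ht
    rw [Set.uIoc_of_le zero_le_one] at ht
    have ht2 : t ^ 2 ≤ 1 := by nlinarith [ht.1, ht.2]
    rw [Real.norm_of_nonneg (sub_nonneg.2 (cos_le_one _))]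
    nlinarith [one_sub_sq_div_two_le_cos (x := x * t), sq_nonneg x]
  simpa using intervalIntegral.norm_integral_le_of_norm_le_const hbound

end Real

theorem Complex.integral_exp_ofReal_mul_mul_I (c a : ℝ) :
    ∫ x in -a..a, Complex.exp ((c * x : ℝ) * Complex.I) = 2 * a * Real.sinc (c * a) := by
  rcases eq_or_ne c 0 with rfl | hc
  · simp
    ring
  have hc' : (c : ℂ) ≠ 0 := by exact_mod_cast hc
  have h := intervalIntegral.integral_comp_mul_left (fun x : ℝ => Complex.exp (x * Complex.I))
    hc (a := -a) (b := a)
  simp only [mul_neg] at h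
  rw [h, integral_exp_mul_I_eq_sinc, Complex.real_smul, Complex.ofReal_inv]
  push_cast
  field_simp

namespace ModelSets

theorem sinc_eq_real_sinc (u : ℝ) : sinc u = Real.sinc (π * u) := by
  rcases eq_or_ne u 0 with rfl | hu
  · simp [sinc]
  · rw [sinc, if_neg hu, Real.sinc_of_ne_zero (mul_ne_zero Real.pi_ne_zero hu)]

theorem abs_sinc_le_one (u : ℝ) : |sinc u| ≤ 1 := by
  simpa [sinc_eq_real_sinc] using Real.abs_sinc_le_one (π * u)

theorem abs_mul_sinc_le (u : ℝ) : |u * sinc u| ≤ π⁻¹ := by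
  have h := Real.mul_sinc (π * u)
  rw [← sinc_eq_real_sinc, mul_assoc] at h
  rw [← mul_one π⁻¹, le_inv_mul_iff₀ Real.pi_pos, ← abs_of_pos Real.pi_pos, ← abs_mul, h]
  exact Real.abs_sin_le_one _

theorem abs_sinc_sub_sinc_le (u v : ℝ) : |sinc u - sinc v| ≤ π * |u - v| := by
  simpa [sinc_eq_real_sinc, ← mul_sub, abs_mul, abs_of_pos Real.pi_pos] using
    Real.abs_sinc_sub_sinc_le (π * u) (π * v)

theorem abs_one_sub_sinc_le (u : ℝ) : |1 - sinc u| ≤ (π * u) ^ 2 / 2 := by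
  simpa [sinc_eq_real_sinc] using Real.abs_one_sub_sinc_le (π * u)

theorem FT1_indicator_Icc {a : ℝ} (ha : 0 ≤ a) (t : ℝ) :
    FT1 ((Set.Icc (-a) a).indicator fun _ => (1 : ℝ)) t = 2 * a * sinc (2 * a * t) := by
  have hind : (fun x : ℝ => (((Set.Icc (-a) a).indicator (fun _ => (1 : ℝ)) x : ℝ) : ℂ) *
      Complex.exp (-(2 * π * Complex.I) * (x * t : ℝ))) = (Set.Icc (-a) a).indicator
        fun x => Complex.exp (((-(2 * π * t)) * x : ℝ) * Complex.I) := by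
    ext x
    by_cases hx : x ∈ Set.Icc (-a) a
    · simp only [Set.indicator_of_mem hx, Complex.ofReal_one, one_mul]
      congr 1
      push_cast
      ring
    · simp [Set.indicator_of_notMem hx]
  rw [FT1, hind, integral_indicator measurableSet_Icc, integral_Icc_eq_integral_Ioc,
    ← intervalIntegral.integral_of_le (by linarith), Complex.integral_exp_ofReal_mul_mul_I,
    sinc_eq_real_sinc, neg_mul, Real.sinc_neg]
  congr 3
  ring

theorem abs_mul_abs_sinc_mul_le {c : ℝ} (hc : 0 < c) (t : ℝ) :
    |t| * |sinc (t * c)| ≤ (π * c)⁻¹ := by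
  have h := abs_mul_sinc_le (t * c)
  rw [abs_mul, abs_mul, abs_of_pos hc, mul_right_comm] at h
  rwa [mul_inv, ← div_eq_mul_inv, le_div_iff₀ hc]

/-- For `r = ε ^ n` and `c = |Ω_n|` this is the paper's `ψ̂_n`. -/
def sincProd (r c t : ℝ) : ℝ := ∏' s : ℕ, sinc (t * (r ^ s * c))

theorem abs_sinc_geom_sub_one_le (t c r : ℝ) (s : ℕ) :
    |sinc (t * (r ^ s * c)) - 1| ≤ (π * t * c) ^ 2 / 2 * (r ^ 2) ^ s := by
  rw [abs_sub_comm]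
  refine (abs_one_sub_sinc_le _).trans_eq ?_
  ring

theorem abs_sincProd_le_one (r c t : ℝ) : |sincProd r c t| ≤ 1 :=
  norm_tprod_le_one (f := fun s : ℕ => sinc (t * (r ^ s * c))) fun _ => abs_sinc_le_one _

variable {r : ℝ}

theorem summable_abs_sinc_geom_sub_one (hr : |r| < 1) (t c : ℝ) :
    Summable fun s : ℕ => |sinc (t * (r ^ s * c)) - 1| := by
  have hr2 : r ^ 2 < 1 := by rwa [sq_lt_one_iff_abs_lt_one]
  exact .of_nonneg_of_le (fun _ => abs_nonneg _) (abs_sinc_geom_sub_one_le t c r)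
    ((summable_geometric_of_lt_one (sq_nonneg r) hr2).mul_left _)

theorem multipliable_sinc_geom (hr : |r| < 1) (t c : ℝ) :
    Multipliable fun s : ℕ => sinc (t * (r ^ s * c)) :=
  multipliable_of_summable_norm_sub_one
    (by simpa only [Real.norm_eq_abs] using summable_abs_sinc_geom_sub_one hr t c)

theorem abs_sincProd_sub_one_le (hr : |r| < 1) (t c : ℝ) :
    |sincProd r c t - 1| ≤ (π * t * c) ^ 2 / 2 * (1 - r ^ 2)⁻¹ := by
  have hr2 : r ^ 2 < 1 := by rwa [sq_lt_one_iff_abs_lt_one]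
  have hgeom := summable_geometric_of_lt_one (sq_nonneg r) hr2
  calc |sincProd r c t - 1| ≤ ∑' s : ℕ, |sinc (t * (r ^ s * c)) - 1| := by
        simpa only [Real.norm_eq_abs, sincProd] using
          norm_tprod_sub_one_le_tsum (f := fun s : ℕ => sinc (t * (r ^ s * c)))
            (fun _ => abs_sinc_le_one _) (summable_abs_sinc_geom_sub_one hr t c)
    _ ≤ ∑' s : ℕ, (π * t * c) ^ 2 / 2 * (r ^ 2) ^ s :=
        (summable_abs_sinc_geom_sub_one hr t c).tsum_le_tsum (abs_sinc_geom_sub_one_le t c r)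
          (hgeom.mul_left _)
    _ = (π * t * c) ^ 2 / 2 * (1 - r ^ 2)⁻¹ := by
        rw [tsum_mul_left, tsum_geometric_of_lt_one (sq_nonneg r) hr2]

theorem sincProd_eq_sinc_mul (hr : |r| < 1) (c t : ℝ) :
    sincProd r c t = sinc (t * c) * sincProd r (r * c) t := by
  have hshift : Multipliable fun s : ℕ => sinc (t * (r ^ (s + 1) * c)) := by
    simpa only [pow_succ, mul_assoc] using multipliable_sinc_geom hr t (r * c)
  simpa only [sincProd, pow_zero, one_mul, pow_succ, mul_assoc] using
    tprod_eq_zero_mul' (f := fun s : ℕ => sinc (t * (r ^ s * c))) hshift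

theorem abs_mul_abs_sincProd_le (hr : |r| < 1) {c : ℝ} (hc : 0 < c) (t : ℝ) :
    |t| * |sincProd r c t| ≤ (π * c)⁻¹ := by
  rw [sincProd_eq_sinc_mul hr, abs_mul, ← mul_assoc]
  exact (mul_le_of_le_one_right (by positivity) (abs_sincProd_le_one _ _ _)).trans
    (abs_mul_abs_sinc_mul_le hc t)

theorem abs_sincProd_sub_sinc_le (hr : |r| < 1) (c t : ℝ) :
    |sincProd r c t - sinc (t * c)| ≤ (π * t * (r * c)) ^ 2 / 2 * (1 - r ^ 2)⁻¹ := by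
  rw [sincProd_eq_sinc_mul hr, ← mul_sub_one, abs_mul]
  exact (mul_le_of_le_one_left (abs_nonneg _) (abs_sinc_le_one _)).trans
    (abs_sincProd_sub_one_le hr t _)

theorem abs_sinc_sub_sincProd_le (hr : |r| < 1) (a : ℝ) {t T : ℝ} (ht : |t| ≤ T) :
    |sinc (2 * a * t) - sincProd r (2 * a * (1 - r)) t| ≤
      (π * T * (r * (2 * a * (1 - r)))) ^ 2 / 2 * (1 - r ^ 2)⁻¹ + π * T * |2 * a * r| := by
  set c := 2 * a * (1 - r)
  have hr2 : 0 ≤ (1 - r ^ 2)⁻¹ := inv_nonneg.2 (by nlinarith [sq_abs r, abs_nonneg r])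
  have ht2 : t ^ 2 ≤ T ^ 2 := by nlinarith [abs_nonneg t, sq_abs t]
  have harg : |t * c - 2 * a * t| = |t| * |2 * a * r| := by
    rw [show t * c - 2 * a * t = -(t * (2 * a * r)) by ring, abs_neg, abs_mul]
  have hsq : (π * t * (r * c)) ^ 2 ≤ (π * T * (r * c)) ^ 2 := by
    nlinarith [mul_le_mul_of_nonneg_right ht2 (sq_nonneg (π * (r * c)))]
  calc |sinc (2 * a * t) - sincProd r c t|
      ≤ |sincProd r c t - sinc (t * c)| + |sinc (t * c) - sinc (2 * a * t)| := by
        rw [abs_sub_comm]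
        exact abs_sub_le _ _ _
    _ ≤ (π * t * (r * c)) ^ 2 / 2 * (1 - r ^ 2)⁻¹ + π * (|t| * |2 * a * r|) := by
        rw [← harg]
        exact add_le_add (abs_sincProd_sub_sinc_le hr c t) (abs_sinc_sub_sinc_le _ _)
    _ ≤ (π * T * (r * c)) ^ 2 / 2 * (1 - r ^ 2)⁻¹ + π * T * |2 * a * r| := by
        rw [mul_assoc π T |2 * a * r|]
        gcongr ?_ / 2 * _ + π * (?_ * _)

theorem tendstoUniformly_sincProd_pow {ε a : ℝ} (hε : |ε| < 1) (ha : 0 < a) :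
    TendstoUniformly (fun (n : ℕ) t => sincProd (ε ^ n) (2 * a * (1 - ε ^ n)) t)
      (fun t => sinc (2 * a * t)) atTop := by
  have hpow : Tendsto (fun n : ℕ => ε ^ n) atTop (𝓝 0) :=
    tendsto_pow_atTop_nhds_zero_of_abs_lt_one hε
  have hhalf : ∀ᶠ n : ℕ in atTop, |ε ^ n| < 1 / 2 := by
    simpa using hpow.abs.eventually (gt_mem_nhds (by norm_num : |(0 : ℝ)| < 1 / 2))
  refine tendstoUniformly_of_tendstoUniformlyOn_closedBall_of_norm_mul_le (C := (π * a)⁻¹)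
    (fun T => ?_) ?_ fun t => ?_
  · set g : ℝ → ℝ := fun r =>
      (π * T * (r * (2 * a * (1 - r)))) ^ 2 / 2 * (1 - r ^ 2)⁻¹ + π * T * |2 * a * r|
    have hg : Tendsto (fun n : ℕ => g (ε ^ n)) atTop (𝓝 0) := by
      have hg0 : ContinuousAt g 0 := by fun_prop (disch := norm_num)
      have h := hg0.tendsto.comp hpow
      rwa [show g 0 = 0 by simp [g]] at h
    refine tendstoUniformlyOn_of_dist_le hg ?_
    filter_upwards [hhalf] with n hn t ht
    rw [Real.dist_eq]
    exact abs_sinc_sub_sincProd_le (by linarith) a (by simpa using ht)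
  · filter_upwards [hhalf] with n hn t
    have hc : a ≤ 2 * a * (1 - ε ^ n) := by nlinarith [le_abs_self (ε ^ n)]
    calc ‖t‖ * ‖sincProd (ε ^ n) (2 * a * (1 - ε ^ n)) t‖ ≤ (π * (2 * a * (1 - ε ^ n)))⁻¹ :=
          abs_mul_abs_sincProd_le (by linarith) (by linarith) t
      _ ≤ (π * a)⁻¹ := by gcongr
  · calc ‖t‖ * ‖sinc (2 * a * t)‖ ≤ (π * (2 * a))⁻¹ := by
          simpa [mul_comm] using abs_mul_abs_sinc_mul_le (by positivity : 0 < 2 * a) t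
      _ ≤ (π * a)⁻¹ := by gcongr; linarith

end ModelSets

/-- For `0 < ε < 1`, `a > 0`, `Ω = [-a,a]`, `Ω_n = (1-ε^n)Ω`, the
infinite products `ψ̂_n(t) = Π_{s=0}^∞ sinc(t ε^{ns} |Ω_n|)` all converge, and the
sequence `ψ̂_n` converges uniformly on `ℝ` to `t ↦ sinc(2at)`, which is `|Ω|⁻¹` times
the Fourier transform of the indicator of `Ω`. -/
theorem statement10 (ε a : ℝ) (hε0 : 0 < ε) (hε1 : ε < 1) (ha : 0 < a) :
    (∀ n : ℕ, 1 ≤ n → ∀ t : ℝ,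
      Multipliable fun s : ℕ => sinc (t * (ε ^ (n * s) * (2 * a * (1 - ε ^ n))))) ∧
    TendstoUniformly
      (fun (n : ℕ) (t : ℝ) => ∏' s : ℕ, sinc (t * (ε ^ (n * s) * (2 * a * (1 - ε ^ n)))))
      (fun t : ℝ => sinc (2 * a * t)) atTop ∧
    (∀ t : ℝ, (sinc (2 * a * t) : ℂ) =
      ((2 * a)⁻¹ : ℂ) * FT1 ((Set.Icc (-a) a).indicator fun _ => (1 : ℝ)) t) := by
  have hε : |ε| < 1 := abs_lt.2 ⟨by linarith, hε1⟩
  simp only [pow_mul]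
  refine ⟨fun n hn t => ?_, tendstoUniformly_sincProd_pow hε ha, fun t => ?_⟩
  · refine multipliable_sinc_geom ?_ t _
    rw [abs_pow]
    exact pow_lt_one₀ (abs_nonneg ε) hε (by omega)
  · have ha' : (a : ℂ) ≠ 0 := by exact_mod_cast ha.ne'
    rw [FT1_indicator_Icc ha.le]
    field_simp
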